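/- Let T be a nonspecial ω₁-tree. Then ◊* implies ◊_T*. -/

import Mathlib

open Set

/-- The first uncountable ordinal `ω₁`. -/
noncomputable def omega1 : Ordinal := Ordinal.omega 1

section TreeDefs

variable {T : Type*} [PartialOrder T]

/-- In a tree, the set of strict predecessors of any node is linearly ordered. -/
def PredsChain (T : Type*) [PartialOrder T] : Prop :=
  ∀ t : T, IsChain (· ≤ ·) {s : T | s < t}

/-- `ht` is *the* height function of the tree: it is strictly monotone on comparable pairs and
the heights of the strict predecessors of `t` are exactly the ordinals below `ht t`; together
with `PredsChain` this says that the set `t↓` of strict predecessors of `t` is well-ordered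
with order type `ht t`. -/
def IsHeightFun (ht : T → Ordinal) : Prop :=
  (∀ s t : T, s < t → ht s < ht t) ∧
  ∀ t : T, ∀ o : Ordinal, o < ht t → ∃ s : T, s < t ∧ ht s = o

/-- The tree has height `ω₁`: every node has height `< ω₁` and every countable ordinal is the
height of some node. -/
def HeightOmega1 (ht : T → Ordinal) : Prop :=
  (∀ t : T, ht t < omega1) ∧ ∀ o : Ordinal, o < omega1 → ∃ t : T, ht t = o

/-- All levels of the tree are countable. -/
def CountableLevels (ht : T → Ordinal) : Prop :=
  ∀ o : Ordinal, {t : T | ht t = o}.Countable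

/-- A tree of height `ω₁` is well-pruned if every node has successors in all later levels. -/
def WellPruned (ht : T → Ordinal) : Prop :=
  ∀ o o' : Ordinal, o < o' → o' < omega1 →
    ∀ s : T, ht s = o → ∃ t : T, s < t ∧ ht t = o'

/-- A special subset of a tree: a union of countably many antichains. -/
def IsSpecialSet (U : Set T) : Prop :=
  ∃ A : ℕ → Set T, (∀ n : ℕ, IsAntichain (· ≤ ·) (A n)) ∧ U ⊆ ⋃ n, A n

/-- Membership in the ideal `NS^T`: there is a regressive map on `B` all of whose fibers
are special. -/
def InNS [OrderBot T] (B : Set T) : Prop :=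
  ∃ f : T → T, (∀ t ∈ B, t ≠ ⊥ → f t < t) ∧
    ∀ t : T, IsSpecialSet {s : T | s ∈ B ∧ f s = t}

/-- The diamond principle `◊_T` for a tree `T`. -/
def DiamondTree (T : Type*) [PartialOrder T] [OrderBot T] : Prop :=
  ∃ D : T → Set T, (∀ t : T, D t ⊆ Set.Iio t) ∧
    ∀ X : Set T, ¬ InNS {t : T | X ∩ Set.Iio t = D t}

end TreeDefs

/-- Club subsets of `ω₁`: closed and unbounded in `ω₁`. -/
def IsClubIn (C : Set Ordinal) : Prop :=
  C ⊆ Set.Iio omega1 ∧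
  (∀ o : Ordinal, o < omega1 → ∃ b ∈ C, o < b) ∧
  ∀ o : Ordinal, o < omega1 → (C ∩ Set.Iio o).Nonempty →
    IsLUB (C ∩ Set.Iio o) o → o ∈ C

/-- Stationary subsets of `ω₁`: sets meeting every club. -/
def IsStationaryIn (S : Set Ordinal) : Prop :=
  ∀ C : Set Ordinal, IsClubIn C → (S ∩ C).Nonempty

/-- The diamond principle `◊(S)` for `S ⊆ ω₁`;  `◊` is `DiamondOn (Set.Iio omega1)`. -/
def DiamondOn (S : Set Ordinal) : Prop :=
  ∃ D : Ordinal → Set Ordinal, (∀ o ∈ S, D o ⊆ Set.Iio o) ∧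
    ∀ X : Set Ordinal, X ⊆ Set.Iio omega1 →
      IsStationaryIn {o ∈ S | X ∩ Set.Iio o = D o}

/-- The principle `◊*`: a sequence of countable families `𝒟_α` of subsets of `α` such that
every `X ⊆ ω₁` satisfies `X ∩ α ∈ 𝒟_α` on a club of `α < ω₁`. -/
def DiamondStar : Prop :=
  ∃ D : Ordinal.{0} → Set (Set Ordinal.{0}),
    (∀ o : Ordinal, o < omega1 → (∀ A ∈ D o, A ⊆ Set.Iio o) ∧ (D o).Countable) ∧
    ∀ X : Set Ordinal, X ⊆ Set.Iio omega1 →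
      ∃ C : Set Ordinal, IsClubIn C ∧ ∀ o ∈ C, X ∩ Set.Iio o ∈ D o

/-- The principle `◊_T*`: each node carries a countable family `𝒟_t` of subsets of `t↓`, and
for every `X ⊆ T` the set of nodes where `X` is *not* guessed belongs to `NS^T`. -/
def DiamondTreeStar (T : Type*) [PartialOrder T] [OrderBot T] : Prop :=
  ∃ D : T → Set (Set T),
    (∀ t : T, (∀ A ∈ D t, A ⊆ Set.Iio t) ∧ (D t).Countable) ∧
    ∀ X : Set T, InNS {t : T | X ∩ Set.Iio t ∉ D t}

/-! A set `X ⊆ T` is coded by a set of countable ordinals through an injection `idx : T → ω₁`,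
which exists because `T` is a union of `ℵ₁` countable levels. On the club of heights `α` that
are closed under `β ↦ sup {idx u | ht u ≤ β}`, every node below a node `t` of height `α` has index
below `α`, so the `◊*`-guesses for the code at `α` yield guesses for `X ∩ t↓`. The nodes whose
height lies outside a club `D` form an `NS^T` set: the regressive map sends `t` to its predecessor
at height `sup (D ∩ ht t)`, and the fibre over `s` consists of nodes of height at most the next
point of `D` above `ht s`, a countable and hence special set. -/

section Omega1

open Cardinal Ordinal Order

theorem succ_lt_omega1 {o : Ordinal} (h : o < omega1) : succ o < omega1 :=
  (isSuccLimit_omega 1).succ_lt h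

theorem countable_Iio_of_lt_omega1 {o : Ordinal.{0}} (h : o < omega1) : (Iio o).Countable := by
  rw [← le_aleph0_iff_set_countable, Cardinal.mk_Iio_ordinal, lift_le_aleph0,
    ← lt_succ_iff, succ_aleph0, ← lt_ord, ord_aleph]
  exact h

theorem countable_Iic_of_lt_omega1 {o : Ordinal.{0}} (h : o < omega1) : (Iic o).Countable := by
  rw [← Iio_succ]
  exact countable_Iio_of_lt_omega1 (succ_lt_omega1 h)

theorem exists_lt_omega1_forall_lt {S : Set Ordinal.{0}} (hS : S.Countable)
    (h : ∀ x ∈ S, x < omega1) : ∃ b < omega1, ∀ x ∈ S, x < b := by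
  have : Countable S := hS.to_subtype
  refine ⟨⨆ x : S, succ x.1, iSup_lt_omega_one fun x => succ_lt_omega1 (h x.1 x.2), fun x hx => ?_⟩
  exact (lt_succ x).trans_le (Ordinal.le_iSup (fun x : S => succ x.1) ⟨x, hx⟩)

theorem mk_Iio_omega1_prod_nat_le : #(Iio omega1.{0} × ℕ) ≤ #(Iio omega1.{0}) := by
  have : ℵ₀ ≤ #(Iio omega1.{0}) := by simp [omega1, Cardinal.mk_Iio_ordinal]
  rw [mk_prod, Cardinal.lift_uzero, mk_nat, lift_aleph0, mul_aleph0_eq this]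

end Omega1

namespace IsClubIn

open Ordinal Order

variable {C : Set Ordinal.{0}}

theorem sSup_inter_Iio_lt (hC : IsClubIn C) {γ : Ordinal.{0}} (hγ : γ < omega1) (hγC : γ ∉ C)
    (hγ0 : γ ≠ 0) : sSup (C ∩ Iio γ) < γ := by
  have hub : γ ∈ upperBounds (C ∩ Iio γ) := fun x hx => hx.2.le
  refine (csSup_le' hub).lt_of_ne fun hsup => ?_
  rcases (C ∩ Iio γ).eq_empty_or_nonempty with hemp | hne
  · exact hγ0 (by rw [← hsup, hemp, csSup_empty, bot_eq_zero])
  · have hlub := isLUB_csSup hne ⟨γ, hub⟩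
    rw [hsup] at hlub
    exact hγC (hC.2.2 γ hγ hne hlub)

theorem sep_forall_lt (hC : IsClubIn C) {g : Ordinal.{0} → Ordinal.{0}}
    (hg : ∀ β < omega1, g β < omega1) : IsClubIn {α ∈ C | ∀ β < α, g β < α} := by
  have hstep : ∀ x, ∃ y, x < omega1 → y ∈ C ∧ x < y ∧ ∀ β ≤ x, g β < y := by
    intro x
    by_cases hx : x < omega1
    · obtain ⟨b, hb, hgb⟩ := exists_lt_omega1_forall_lt ((countable_Iic_of_lt_omega1 hx).image g)
        (by rintro _ ⟨β, hβ, rfl⟩; exact hg β (hβ.trans_lt hx))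
      obtain ⟨y, hyC, hy⟩ := hC.2.1 _ (max_lt hb hx)
      exact ⟨y, fun _ => ⟨hyC, (le_max_right _ _).trans_lt hy,
        fun β hβ => (hgb _ ⟨β, hβ, rfl⟩).trans ((le_max_left _ _).trans_lt hy)⟩⟩
    · exact ⟨x, fun h => (hx h).elim⟩
  choose F hF using hstep
  refine ⟨fun α hα => hC.1 hα.1, fun o ho => ?_, fun γ hγ hne hlub => ?_⟩
  · -- `α = sup_n F^[n] o` is a limit of points of `C` and is closed under `g`.
    have hα : nfp F o < omega1 :=
      nfp_lt_ord (by rw [omega1, Cardinal.cof_omega_one]; exact Cardinal.aleph0_lt_aleph_one)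
        (fun x hx => (hF x hx).1 |> hC.1) ho
    have hit : ∀ n, F^[n] o < omega1 := fun n => (iterate_le_nfp F o n).trans_lt hα
    have hFit : ∀ n, F^[n + 1] o = F (F^[n] o) := fun n => Function.iterate_succ_apply' F n o
    have hmem : ∀ n, F^[n + 1] o ∈ C := fun n => hFit n ▸ (hF _ (hit n)).1
    have hinc : ∀ n, F^[n] o < F^[n + 1] o := fun n => hFit n ▸ (hF _ (hit n)).2.1
    have hlt : ∀ n, F^[n] o < nfp F o := fun n => (hinc n).trans_le (iterate_le_nfp F o (n + 1))
    refine ⟨nfp F o, ⟨hC.2.2 _ hα ⟨_, hmem 0, hlt 1⟩ ⟨fun x hx => hx.2.le, fun x hx => ?_⟩,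
      fun β hβ => ?_⟩, hlt 0⟩
    · exact nfp_le_iff.2 fun n => (hinc n).le.trans (hx ⟨hmem n, hlt (n + 1)⟩)
    · obtain ⟨n, hn⟩ := lt_nfp_iff.1 hβ
      exact ((hF _ (hit n)).2.2 β hn.le).trans_le (hFit n ▸ iterate_le_nfp F o (n + 1))
  · obtain ⟨δ, hδ, hδγ⟩ := hne
    refine ⟨hC.2.2 γ hγ ⟨δ, hδ.1, hδγ⟩ ⟨fun x hx => hx.2.le, fun x hx => ?_⟩, fun β hβ => ?_⟩
    · exact hlub.2 fun y hy => hx ⟨hy.1.1, hy.2⟩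
    · obtain ⟨α, hα, hβα⟩ := (lt_isLUB_iff hlub).1 hβ
      exact (hα.1.2 β hβα).trans hα.2

end IsClubIn

section Tree

variable {T : Type*} {ht : T → Ordinal.{0}}

theorem countable_setOf_height_le (hlev : CountableLevels ht) {β : Ordinal.{0}}
    (hβ : β < omega1) : {u | ht u ≤ β}.Countable := by
  have : {u | ht u ≤ β} = ⋃ o ∈ Iic β, {u | ht u = o} := by ext; simp
  rw [this]
  exact (countable_Iic_of_lt_omega1 hβ).biUnion fun o _ => hlev o

theorem exists_injective_lt_omega1 (hΩ : ∀ t, ht t < omega1) (hlev : CountableLevels ht) :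
    ∃ idx : T → Ordinal.{0}, Function.Injective idx ∧ ∀ u, idx u < omega1 := by
  choose code hcode using fun o => Set.countable_iff_exists_injOn.1 (hlev o)
  have hpair : Function.Injective fun t => ((⟨ht t, hΩ t⟩ : Iio omega1), code (ht t) t) := by
    intro a b hab
    obtain ⟨hh, hc⟩ := Prod.mk.inj hab
    replace hh : ht a = ht b := congrArg Subtype.val hh
    rw [hh] at hc
    exact hcode (ht b) hh rfl hc
  obtain ⟨e⟩ := Cardinal.le_def _ _ |>.1 mk_Iio_omega1_prod_nat_le
  exact ⟨fun t => e (⟨ht t, hΩ t⟩, code (ht t) t),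
    Subtype.val_injective.comp (e.injective.comp hpair), fun t => (e _).2⟩

theorem exists_forall_lt_apply_height {idx : T → Ordinal.{0}}
    (hΩ : ∀ t, ht t < omega1) (hlev : CountableLevels ht) (hidx : ∀ u, idx u < omega1) :
    ∃ g : Ordinal.{0} → Ordinal.{0}, (∀ β < omega1, g β < omega1) ∧ ∀ u, idx u < g (ht u) := by
  have hbound : ∀ β, ∃ b, β < omega1 → b < omega1 ∧ ∀ u, ht u ≤ β → idx u < b := fun β =>
    if hβ : β < omega1 then
      (exists_lt_omega1_forall_lt ((countable_setOf_height_le hlev hβ).image idx)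
        (by rintro _ ⟨u, -, rfl⟩; exact hidx u)).imp
        fun _ hb _ => ⟨hb.1, fun u hu => hb.2 _ ⟨u, hu, rfl⟩⟩
    else ⟨0, fun h => (hβ h).elim⟩
  choose g hg using hbound
  exact ⟨g, fun β hβ => (hg β hβ).1, fun u => (hg _ (hΩ u)).2 u le_rfl⟩

variable [PartialOrder T]

theorem Set.Countable.isSpecialSet {U : Set T} (hU : U.Countable) : IsSpecialSet U := by
  obtain ⟨code, hcode⟩ := Set.countable_iff_exists_injOn.1 hU
  refine ⟨fun n => {x ∈ U | code x = n}, fun n => ?_, fun x hx => mem_iUnion.2 ⟨_, hx, rfl⟩⟩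
  exact Set.Subsingleton.isAntichain (fun x hx y hy => hcode hx.1 hy.1 (hx.2.trans hy.2.symm)) _

theorem IsSpecialSet.mono {U V : Set T} (hUV : U ⊆ V) (hV : IsSpecialSet V) : IsSpecialSet U :=
  let ⟨A, hA, hVA⟩ := hV
  ⟨A, hA, hUV.trans hVA⟩

theorem InNS.mono [OrderBot T] {A B : Set T} (hAB : A ⊆ B) (hB : InNS B) : InNS A :=
  let ⟨f, hf, hfib⟩ := hB
  ⟨f, fun t ht => hf t (hAB ht), fun t => (hfib t).mono fun _ hs => And.imp_left (@hAB _) hs⟩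

theorem height_ne_zero_of_ne_bot [OrderBot T] (hht : IsHeightFun ht) {t : T} (h : t ≠ ⊥) :
    ht t ≠ 0 :=
  (hht.1 ⊥ t (bot_lt_iff_ne_bot.2 h)).ne_bot

theorem inNS_setOf_height_notMem [OrderBot T] (hht : IsHeightFun ht)
    (hΩ : ∀ t, ht t < omega1) (hlev : CountableLevels ht) {D : Set Ordinal.{0}}
    (hD : IsClubIn D) : InNS {t | ht t ∉ D} := by
  have hpred : ∀ t, ∃ s, sSup (D ∩ Iio (ht t)) < ht t → s < t ∧ ht s = sSup (D ∩ Iio (ht t)) :=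
    fun t => if h : sSup (D ∩ Iio (ht t)) < ht t then (hht.2 t _ h).imp fun _ hs _ => hs
      else ⟨t, fun h' => (h h').elim⟩
  choose f hf using hpred
  have hlt : ∀ t, ht t ∉ D → ht t ≠ 0 → sSup (D ∩ Iio (ht t)) < ht t :=
    fun t htD ht0 => hD.sSup_inter_Iio_lt (hΩ t) htD ht0
  refine ⟨f, fun t htD hbot => (hf t (hlt t htD (height_ne_zero_of_ne_bot hht hbot))).1,
    fun s => ?_⟩
  obtain ⟨δ, hδD, hsδ⟩ := hD.2.1 (ht s) (hΩ s)
  refine ((countable_setOf_height_le hlev (hD.1 hδD)).isSpecialSet).mono ?_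
  rintro u ⟨huD, rfl⟩
  by_cases hu0 : ht u = 0
  · exact hu0.trans_le zero_le
  · have hfu := (hf u (hlt u huD hu0)).2
    show ht u ≤ δ
    by_contra! hδu
    have hδ_le : δ ≤ sSup (D ∩ Iio (ht u)) := le_csSup ⟨ht u, fun x hx => hx.2.le⟩ ⟨hδD, hδu⟩
    exact hδ_le.not_gt (hfu ▸ hsδ)

end Tree

theorem diamondTreeStar_of_diamondStar {T : Type*} [PartialOrder T] [OrderBot T]
    {ht : T → Ordinal.{0}} (hht : IsHeightFun ht) (hΩ : ∀ t, ht t < omega1)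
    (hlev : CountableLevels ht) (hstar : DiamondStar) : DiamondTreeStar T := by
  obtain ⟨idx, hinj, hidx⟩ := exists_injective_lt_omega1 hΩ hlev
  obtain ⟨g, hg, hidx_g⟩ := exists_forall_lt_apply_height hΩ hlev hidx
  obtain ⟨Ds, hDs, hguess⟩ := hstar
  refine ⟨fun t => (fun A => idx ⁻¹' A ∩ Iio t) '' Ds (ht t),
    fun t => ⟨?_, (hDs _ (hΩ t)).2.image _⟩, fun X => ?_⟩
  · rintro _ ⟨A, -, rfl⟩
    exact inter_subset_right
  obtain ⟨C, hC, hCX⟩ := hguess (idx '' X) (image_subset_iff.2 fun u _ => hidx u)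
  refine InNS.mono ?_ (inNS_setOf_height_notMem hht hΩ hlev (hC.sep_forall_lt hg))
  intro t hbad htC
  refine hbad ⟨_, hCX _ htC.1, ?_⟩
  ext u
  simp only [mem_inter_iff, mem_preimage, hinj.mem_set_image, mem_Iio]
  exact ⟨fun h => ⟨h.1.1, h.2⟩,
    fun h => ⟨⟨h.1, (hidx_g u).trans (htC.2 _ (hht.1 u t h.2))⟩, h.2⟩⟩

section Lift

universe u v

theorem exists_eq_lift_of_lt_omega1 {T : Type*} {ht : T → Ordinal.{u}}
    (hΩ : ∀ t, ht t < omega1.{u}) :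
    ∃ ht0 : T → Ordinal.{0}, ht = fun t => Ordinal.lift (ht0 t) := by
  have hω : omega1.{u} = Ordinal.lift.{u} omega1.{0} := by
    simp only [omega1, Ordinal.lift_omega, Ordinal.lift_one]
  choose ht0 hht0 using fun t => Ordinal.lt_lift_iff.1 (hω ▸ hΩ t)
  exact ⟨ht0, funext fun t => (hht0 t).2.symm⟩

variable {T : Type*} {ht : T → Ordinal.{v}}

theorem IsHeightFun.of_lift [PartialOrder T] (h : IsHeightFun fun t => Ordinal.lift.{u} (ht t)) :
    IsHeightFun ht := by
  refine ⟨fun s t hst => Ordinal.lift_lt.1 (h.1 s t hst), fun t o ho => ?_⟩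
  obtain ⟨s, hst, hs⟩ := h.2 t _ (Ordinal.lift_lt.2 ho)
  exact ⟨s, hst, Ordinal.lift_inj.1 hs⟩

theorem CountableLevels.of_lift (h : CountableLevels fun t => Ordinal.lift.{u} (ht t)) :
    CountableLevels ht := fun o => by
  simpa only [Ordinal.lift_inj] using h (Ordinal.lift.{u} o)

end Lift

theorem stmt14_general {T : Type*} [PartialOrder T] [OrderBot T]
    (ht : T → Ordinal)
    (hht : IsHeightFun ht) (hΩ : HeightOmega1 ht) (hlev : CountableLevels ht)
    (hstar : DiamondStar) :
    DiamondTreeStar T := by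
  obtain ⟨ht0, rfl⟩ := exists_eq_lift_of_lt_omega1 hΩ.1
  exact diamondTreeStar_of_diamondStar hht.of_lift
    (fun t => Ordinal.lift_lt_omega_one.1 (hΩ.1 t)) hlev.of_lift hstar

/-- If `T` is a nonspecial `ω₁`-tree, then `◊*` implies `◊_T*`. -/
theorem stmt14 {T : Type*} [PartialOrder T] [OrderBot T]
    (hchain : PredsChain T) (ht : T → Ordinal)
    (hht : IsHeightFun ht) (hΩ : HeightOmega1 ht) (hlev : CountableLevels ht)
    (hns : ¬ IsSpecialSet (Set.univ : Set T))
    (hstar : DiamondStar) :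
    DiamondTreeStar T :=
  stmt14_general ht hht hΩ hlev hstar
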